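/- Let G be a connected undirected simple graph on the vertex set {1,…,m} with m ≥ 2 and Laplacian matrix L ∈ ℝ^{m×m}. Let X ∈ ℝ^{n×d} have column blocks X_j ∈ ℝ^{n×d_j} (d = Σ_{j=1}^m d_j), with vectors θ ∈ ℝ^d partitioned accordingly as θ = (θ₁;…;θ_m). Let ℓ₁,…,ℓₙ : ℝ → ℝ be convex differentiable functions, let r : ℝ^d → ℝ, let κ > 0, let λ̄₁,…,λ̄_m ∈ ℝⁿ, and let θ̂ ∈ ℝ^d. Then inf over θ ∈ ℝ^d and V ∈ ℝ^{n×m} of [ r(θ) + (1/n)·Σ_{j=1}^m λ̄_jᵀ (X_j θ_j + V L e_j) − (1/n)·Σ_{i=1}^n ℓᵢ*(λ̄_{1,i}) + κ·(‖θ‖₂² + ‖V‖_F²) ] ≤ r(θ̂) + (1/n)·Σ_{i=1}^n ℓᵢ((X θ̂)ᵢ) + κ·(1 + 2·‖L†‖²·‖X‖²)·‖θ̂‖₂², where λ̄_{1,i} denotes the i-th coordinate of λ̄₁ and the left-hand side is interpreted in the extended reals. -/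

import Mathlib

/-!
Evaluate the objective at `θ = θ̂` and `V = B (L†)ᵀ`, where column `j` of `B` is `-X_j θ̂_j` and
column `1` additionally carries the full prediction `X θ̂`. The rows of `B` sum to zero, so for a
connected graph they lie in the row space of `L`, and `L L† L = L` gives `V L = B`. The linear
term then collapses to `λ̄₁ᵀ X θ̂`, which Fenchel–Young bounds by
`Σᵢ ℓᵢ((X θ̂)ᵢ) + Σᵢ ℓᵢ*(λ̄_{1,i})`. Finally `‖V‖_F ≤ ‖L†‖ ‖B‖_F`, and `‖B‖_F² ≤ 2 ‖X‖² ‖θ̂‖₂²`: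
column `1` of `B` is `X` applied to `θ̂` with block `1` zeroed, and each other column `j` is `X`
applied to block `j` of `θ̂` alone, so both parts are at most `‖X‖² ‖θ̂‖₂²`.
-/

open Matrix Finset

/-- The ℓ₂→ℓ₂ operator norm (largest singular value) of a real matrix. -/
noncomputable def opNorm {α β : Type*} [Fintype α] [Fintype β] [DecidableEq β]
    (M : Matrix α β ℝ) : ℝ :=
  ‖LinearMap.toContinuousLinearMap (Matrix.toEuclideanLin M)‖

def IsMoorePenrose {α β : Type*} [Fintype α] [Fintype β]
    (M : Matrix α β ℝ) (P : Matrix β α ℝ) : Prop :=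
  M * P * M = M ∧ P * M * P = P ∧ (M * P)ᵀ = M * P ∧ (P * M)ᵀ = P * M

open Classical in
noncomputable def pinv {α β : Type*} [Fintype α] [Fintype β]
    (M : Matrix α β ℝ) : Matrix β α ℝ :=
  if h : ∃ P, IsMoorePenrose M P then h.choose else 0

/-- The convex (Fenchel) conjugate of `ℓ : ℝ → ℝ`, valued in the extended reals. -/
noncomputable def sconj (g : ℝ → ℝ) (v : ℝ) : EReal :=
  ⨆ x : ℝ, ((v * x - g x : ℝ) : EReal)

lemma sum_sq_mulVec_le_opNorm_sq {α β : Type*} [Fintype α] [Fintype β] [DecidableEq β]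
    (M : Matrix α β ℝ) (x : β → ℝ) :
    ∑ i, (M *ᵥ x) i ^ 2 ≤ opNorm M ^ 2 * ∑ k, x k ^ 2 := by
  have h := (LinearMap.toContinuousLinearMap (Matrix.toEuclideanLin M)).le_opNorm
    (WithLp.toLp 2 x)
  have := pow_le_pow_left₀ (norm_nonneg _) h 2
  simpa [opNorm, mul_pow, EuclideanSpace.real_norm_sq_eq] using this

lemma sum_sq_sum_mulVec_le {α ι : Type*} [Fintype α] [Fintype ι] [DecidableEq ι]
    {κ : ι → Type*} [∀ j, Fintype (κ j)] [∀ j, DecidableEq (κ j)]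
    (Xb : ∀ j, Matrix α (κ j) ℝ) (X : Matrix α ((j : ι) × κ j) ℝ)
    (hX : ∀ i j k, X i ⟨j, k⟩ = Xb j i k) (θ : ∀ j, κ j → ℝ) (s : Finset ι) :
    ∑ i, (∑ j ∈ s, (Xb j *ᵥ θ j) i) ^ 2 ≤ opNorm X ^ 2 * ∑ j ∈ s, ∑ k, θ j k ^ 2 := by
  have h := sum_sq_mulVec_le_opNorm_sq X (fun p => if p.1 ∈ s then θ p.1 p.2 else 0)
  simpa [Matrix.mulVec, dotProduct, Fintype.sum_sigma, hX, apply_ite, Finset.sum_ite_mem] using h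

lemma IsMoorePenrose.map {α : Type*} [Fintype α] [DecidableEq α] {M P : Matrix α α ℝ}
    (h : IsMoorePenrose M P) (φ : Matrix α α ℝ ≃⋆ₐ[ℝ] Matrix α α ℝ) :
    IsMoorePenrose (φ M) (φ P) := by
  have hT : ∀ A : Matrix α α ℝ, Aᵀ = star A := fun A => by
    rw [star_eq_conjTranspose, conjTranspose_eq_transpose_of_trivial]
  obtain ⟨h₁, h₂, h₃, h₄⟩ := h
  simp only [IsMoorePenrose, hT] at *
  refine ⟨?_, ?_, ?_, ?_⟩ <;> simp only [← map_mul, ← map_star, h₁, h₂, h₃, h₄]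

lemma isMoorePenrose_diagonal {α : Type*} [Fintype α] [DecidableEq α] (d : α → ℝ) :
    IsMoorePenrose (diagonal d) (diagonal d⁻¹) := by
  refine ⟨?_, ?_, ?_, ?_⟩ <;> simp [diagonal_mul_diagonal]
  exact fun i => by simpa using mul_inv_mul_cancel (d i)⁻¹

lemma exists_isMoorePenrose_of_isHermitian {α : Type*} [Fintype α] [DecidableEq α]
    {M : Matrix α α ℝ} (hM : M.IsHermitian) : ∃ P, IsMoorePenrose M P := by
  have h := (isMoorePenrose_diagonal hM.eigenvalues).map
    (Unitary.conjStarAlgAut ℝ _ hM.eigenvectorUnitary)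
  have hspec := hM.spectral_theorem
  rw [RCLike.ofReal_real_eq_id, Function.id_comp] at hspec
  rw [← hspec] at h
  exact ⟨_, h⟩

lemma isMoorePenrose_pinv_of_isHermitian {α : Type*} [Fintype α] [DecidableEq α]
    {M : Matrix α α ℝ} (hM : M.IsHermitian) : IsMoorePenrose M (pinv M) := by
  have h := exists_isMoorePenrose_of_isHermitian hM
  rw [pinv, dif_pos h]
  exact h.choose_spec

namespace SimpleGraph

variable {V : Type*} [Fintype V] [DecidableEq V] (G : SimpleGraph V) [DecidableRel G.Adj]

lemma range_toLin'_lapMatrix (hG : G.Connected) :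
    LinearMap.range (G.lapMatrix ℝ).toLin' =
      LinearMap.ker (dotProductBilin ℝ ℝ (1 : V → ℝ)) := by
  have hker : Module.finrank ℝ (LinearMap.ker (G.lapMatrix ℝ).toLin') = 1 := by
    have := hG.preconnected.subsingleton_connectedComponent
    have : Nonempty G.ConnectedComponent := ⟨G.connectedComponentMk hG.nonempty.some⟩
    rw [← card_connectedComponent_eq_finrank_ker_toLin'_lapMatrix]
    exact le_antisymm (Fintype.card_le_one_iff_subsingleton.mpr inferInstance) Fintype.card_pos
  have hne : dotProductBilin ℝ ℝ (1 : V → ℝ) ≠ 0 := fun h => by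
    have := hG.nonempty
    simpa using DFunLike.congr_fun h 1
  refine Submodule.eq_of_le_of_finrank_eq ?_ ?_
  · rintro _ ⟨c, rfl⟩
    simp [dotProduct_mulVec, ← mulVec_transpose, (G.isSymm_lapMatrix (R := ℝ)).eq, Pi.one_def,
      lapMatrix_mulVec_const_eq_zero]
  · have h₁ := LinearMap.finrank_range_add_finrank_ker (G.lapMatrix ℝ).toLin'
    have h₂ := Module.Dual.finrank_ker_add_one_of_ne_zero hne
    omega

lemma exists_mul_lapMatrix_eq (hG : G.Connected) {ι : Type*} (B : Matrix ι V ℝ)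
    (hB : ∀ i, ∑ j, B i j = 0) : ∃ C : Matrix ι V ℝ, C * G.lapMatrix ℝ = B := by
  have hrow : ∀ i, ∃ c, c ᵥ* G.lapMatrix ℝ = B i := fun i => by
    have : B i ∈ LinearMap.range (G.lapMatrix ℝ).toLin' := by
      rw [G.range_toLin'_lapMatrix hG]
      simpa [one_dotProduct] using hB i
    obtain ⟨c, hc⟩ := this
    exact ⟨c, by rwa [← mulVec_transpose, (G.isSymm_lapMatrix (R := ℝ)).eq]⟩
  choose C hC using hrow
  refine ⟨of C, Matrix.ext fun i j => ?_⟩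
  rw [mul_apply_eq_vecMul]
  exact congrFun (hC i) j

end SimpleGraph

lemma IsMoorePenrose.mul_transpose_mul_eq {α ι : Type*} [Fintype α] {M P : Matrix α α ℝ}
    (h : IsMoorePenrose M P) (hM : M.IsSymm) {B C : Matrix ι α ℝ} (hC : C * M = B) :
    B * Pᵀ * M = B := by
  have hMPM : M * Pᵀ * M = M := by
    simpa [transpose_mul, hM.eq, Matrix.mul_assoc] using congrArg transpose h.1
  rw [← hC, Matrix.mul_assoc C, Matrix.mul_assoc C, hMPM]

lemma sum_sq_mul_transpose_le {ι α β : Type*} [Fintype ι] [Fintype α] [Fintype β] [DecidableEq β]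
    (B : Matrix ι β ℝ) (P : Matrix α β ℝ) :
    ∑ i, ∑ k, (B * Pᵀ) i k ^ 2 ≤ opNorm P ^ 2 * ∑ i, ∑ j, B i j ^ 2 := by
  rw [Finset.mul_sum]
  refine Finset.sum_le_sum fun i _ => ?_
  simpa only [mul_apply_eq_vecMul, vecMul_transpose] using sum_sq_mulVec_le_opNorm_sq P (B i)

lemma coe_sub_mul_sum_sconj_le {ι : Type*} [Fintype ι] (ℓ : ι → ℝ → ℝ) (lam u : ι → ℝ)
    (a b : ℝ) {c : ℝ} (hc : 0 ≤ c) :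
    ((a + c * (lam ⬝ᵥ u) + b : ℝ) : EReal) - (c : EReal) * ∑ i, sconj (ℓ i) (lam i)
      ≤ ((a + c * ∑ i, ℓ i (u i) + b : ℝ) : EReal) := by
  set y : ℝ := ∑ i, (lam i * u i - ℓ i (u i)) with hy
  have fenchelYoung : (y : EReal) ≤ ∑ i, sconj (ℓ i) (lam i) := by
    refine (map_sum (⟨⟨Real.toEReal, EReal.coe_zero⟩, EReal.coe_add⟩ : ℝ →+ EReal)
      (fun i => lam i * u i - ℓ i (u i)) univ).trans_le ?_
    exact Finset.sum_le_sum fun i _ => le_iSup (fun x => ((lam i * x - ℓ i x : ℝ) : EReal)) (u i)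
  calc _ ≤ ((a + c * (lam ⬝ᵥ u) + b : ℝ) : EReal) - (c : EReal) * y :=
        EReal.sub_le_sub le_rfl (mul_le_mul_of_nonneg_left fenchelYoung (EReal.coe_nonneg.mpr hc))
    _ = _ := by
        rw [← EReal.coe_mul, ← EReal.coe_sub, hy, Finset.sum_sub_distrib, dotProduct]
        congr 1
        ring

section BlockResidual

variable {α ι : Type*} [Fintype ι] [DecidableEq ι] {κ : ι → Type*}
  [∀ j, Fintype (κ j)] (Xb : ∀ j, Matrix α (κ j) ℝ) (θ : ∀ j, κ j → ℝ) (j₀ : ι)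

-- A `V` with `V L = blockResidual` cancels every block term except the one of block `j₀`.
def blockResidual : Matrix α ι ℝ :=
  of fun i j => (if j = j₀ then ∑ j', (Xb j' *ᵥ θ j') i else 0) - (Xb j *ᵥ θ j) i

lemma sum_blockResidual_row (i : α) : ∑ j, blockResidual Xb θ j₀ i j = 0 := by
  simp [blockResidual, Finset.sum_sub_distrib]

lemma sum_dotProduct_add_blockResidual [Fintype α] (lam : ι → α → ℝ) :
    ∑ j, lam j ⬝ᵥ (fun i => (Xb j *ᵥ θ j) i + blockResidual Xb θ j₀ i j)
      = lam j₀ ⬝ᵥ (fun i => ∑ j, (Xb j *ᵥ θ j) i) := by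
  have hcol : ∀ j, (fun i => (Xb j *ᵥ θ j) i + blockResidual Xb θ j₀ i j)
      = if j = j₀ then fun i => ∑ j, (Xb j *ᵥ θ j) i else 0 := fun j => by
    ext i
    by_cases h : j = j₀
    · subst h
      simp [blockResidual]
    · simp [blockResidual, h]
  simp [hcol, apply_ite]

lemma sum_sq_blockResidual_le [Fintype α] [∀ j, DecidableEq (κ j)] (X : Matrix α ((j : ι) × κ j) ℝ)
    (hX : ∀ i j k, X i ⟨j, k⟩ = Xb j i k) :
    ∑ i, ∑ j, blockResidual Xb θ j₀ i j ^ 2 ≤ 2 * opNorm X ^ 2 * ∑ j, ∑ k, θ j k ^ 2 := by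
  set B := blockResidual Xb θ j₀
  set others := univ.erase j₀
  have hcol₀ : ∑ i, B i j₀ ^ 2 ≤ opNorm X ^ 2 * ∑ j ∈ others, ∑ k, θ j k ^ 2 := by
    have hB : ∀ i, B i j₀ = ∑ j ∈ others, (Xb j *ᵥ θ j) i := fun i => by
      simp only [B, blockResidual, of_apply, ↓reduceIte, others]
      rw [← add_sum_erase _ _ (mem_univ j₀)]
      ring
    simpa only [hB] using sum_sq_sum_mulVec_le Xb X hX θ others
  have hcol : ∀ j ∈ others, ∑ i, B i j ^ 2 ≤ opNorm X ^ 2 * ∑ k, θ j k ^ 2 := fun j hj => by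
    simpa [B, blockResidual, Finset.ne_of_mem_erase hj] using sum_sq_sum_mulVec_le Xb X hX θ {j}
  have hothers : ∑ j ∈ others, ∑ k, θ j k ^ 2 ≤ ∑ j, ∑ k, θ j k ^ 2 :=
    sum_le_sum_of_subset_of_nonneg (subset_univ _) fun _ _ _ => by positivity
  calc ∑ i, ∑ j, B i j ^ 2 = ∑ i, B i j₀ ^ 2 + ∑ j ∈ others, ∑ i, B i j ^ 2 := by
        rw [sum_comm, ← add_sum_erase _ _ (mem_univ j₀)]
    _ ≤ opNorm X ^ 2 * ∑ j ∈ others, ∑ k, θ j k ^ 2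
          + opNorm X ^ 2 * ∑ j ∈ others, ∑ k, θ j k ^ 2 :=
        add_le_add hcol₀ (by rw [mul_sum]; exact sum_le_sum hcol)
    _ ≤ _ := by nlinarith [mul_le_mul_of_nonneg_left hothers (sq_nonneg (opNorm X))]

end BlockResidual

-- The paper's vertex `1` is `0 : Fin m`.
theorem stmt_8_general {m n : ℕ} [NeZero m]
    (G : SimpleGraph (Fin m)) [DecidableRel G.Adj] (hG : G.Connected)
    (d : Fin m → ℕ) (Xb : ∀ j, Matrix (Fin n) (Fin (d j)) ℝ)
    (X : Matrix (Fin n) ((j : Fin m) × Fin (d j)) ℝ)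
    (hX : ∀ i j k, X i ⟨j, k⟩ = Xb j i k)
    (ℓ : Fin n → ℝ → ℝ)
    (r : (∀ j, Fin (d j) → ℝ) → ℝ)
    (κ : ℝ) (hκ : 0 < κ)
    (lambar : Fin m → Fin n → ℝ)
    (θhat : ∀ j, Fin (d j) → ℝ) :
    (⨅ (θ : ∀ j, Fin (d j) → ℝ) (V : Matrix (Fin n) (Fin m) ℝ),
        ((r θ + (1 / (n : ℝ)) * ∑ j, lambar j ⬝ᵥ
              (fun i => (Xb j).mulVec (θ j) i + (V * G.lapMatrix ℝ) i j)
            + κ * ((∑ j, ∑ k, (θ j k) ^ 2) + ∑ i, ∑ j, (V i j) ^ 2) : ℝ) : EReal)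
          - ((1 / (n : ℝ) : ℝ) : EReal) * ∑ i, sconj (ℓ i) (lambar 0 i))
      ≤ ((r θhat + (1 / (n : ℝ)) * ∑ i, ℓ i (∑ j, (Xb j).mulVec (θhat j) i)
          + κ * (1 + 2 * opNorm (pinv (G.lapMatrix ℝ)) ^ 2 * opNorm X ^ 2)
            * (∑ j, ∑ k, (θhat j k) ^ 2) : ℝ) : EReal) := by
  set L := G.lapMatrix ℝ
  set P := pinv L
  set B := blockResidual Xb θhat 0
  obtain ⟨C, hC⟩ := G.exists_mul_lapMatrix_eq hG B (sum_blockResidual_row Xb θhat 0)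
  have hVL : B * Pᵀ * L = B :=
    (isMoorePenrose_pinv_of_isHermitian (G.isHermitian_lapMatrix (R := ℝ))).mul_transpose_mul_eq
      (G.isSymm_lapMatrix (R := ℝ)) hC
  have hV : ∑ i, ∑ j, (B * Pᵀ) i j ^ 2
      ≤ opNorm P ^ 2 * (2 * opNorm X ^ 2 * ∑ j, ∑ k, θhat j k ^ 2) :=
    (sum_sq_mul_transpose_le B P).trans
      (mul_le_mul_of_nonneg_left (sum_sq_blockResidual_le Xb θhat 0 X hX) (sq_nonneg _))
  refine (iInf₂_le θhat (B * Pᵀ)).trans ?_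
  rw [hVL, sum_dotProduct_add_blockResidual]
  refine (coe_sub_mul_sum_sconj_le ℓ _ _ _ _ (by positivity)).trans (EReal.coe_le_coe_iff.mpr ?_)
  rw [mul_assoc κ]
  gcongr
  linarith

/-- Upper bound on the infimum of the Lagrangian-type objective: for a connected graph `G`
on `{1,…,m}` (`m ≥ 2`, the first agent has index `0`) with Laplacian `L`, design blocks
`X_j`, convex differentiable losses `ℓᵢ`, regularizer `r`, `κ > 0`, dual vectors `λ̄_j`
and any `θ̂`:
`inf_{θ,V} [ r(θ) + (1/n)·Σ_j λ̄_jᵀ(X_j θ_j + V L e_j) − (1/n)·Σᵢ ℓᵢ*(λ̄_{1,i})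
  + κ(‖θ‖₂² + ‖V‖_F²) ] ≤ r(θ̂) + (1/n)·Σᵢ ℓᵢ((Xθ̂)ᵢ) + κ(1 + 2‖L†‖²‖X‖²)‖θ̂‖₂²`. -/
theorem stmt_8 {m n : ℕ} [NeZero m] (hm : 2 ≤ m)
    (G : SimpleGraph (Fin m)) [DecidableRel G.Adj] (hG : G.Connected)
    (d : Fin m → ℕ) (Xb : ∀ j, Matrix (Fin n) (Fin (d j)) ℝ)
    (X : Matrix (Fin n) ((j : Fin m) × Fin (d j)) ℝ)
    (hX : ∀ i j k, X i ⟨j, k⟩ = Xb j i k)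
    (ℓ : Fin n → ℝ → ℝ)
    (hconv : ∀ i, ConvexOn ℝ Set.univ (ℓ i))
    (hdiff : ∀ i, Differentiable ℝ (ℓ i))
    (r : (∀ j, Fin (d j) → ℝ) → ℝ)
    (κ : ℝ) (hκ : 0 < κ)
    (lambar : Fin m → Fin n → ℝ)
    (θhat : ∀ j, Fin (d j) → ℝ) :
    (⨅ (θ : ∀ j, Fin (d j) → ℝ) (V : Matrix (Fin n) (Fin m) ℝ),
        ((r θ + (1 / (n : ℝ)) * ∑ j, lambar j ⬝ᵥ
              (fun i => (Xb j).mulVec (θ j) i + (V * G.lapMatrix ℝ) i j)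
            + κ * ((∑ j, ∑ k, (θ j k) ^ 2) + ∑ i, ∑ j, (V i j) ^ 2) : ℝ) : EReal)
          - ((1 / (n : ℝ) : ℝ) : EReal) * ∑ i, sconj (ℓ i) (lambar 0 i))
      ≤ ((r θhat + (1 / (n : ℝ)) * ∑ i, ℓ i (∑ j, (Xb j).mulVec (θhat j) i)
          + κ * (1 + 2 * opNorm (pinv (G.lapMatrix ℝ)) ^ 2 * opNorm X ^ 2)
            * (∑ j, ∑ k, (θhat j k) ^ 2) : ℝ) : EReal) :=
  stmt_8_general G hG d Xb X hX ℓ r κ hκ lambar θhat
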